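/- arXiv:1304.3318 — 2 statements merged into one kernel-verified Lean document; each statement's English description precedes it below -/
import Mathlib

section
/- Let g₁, g₂ ∈ SL(2,ℝ) be hyperbolic matrices (|trace| > 2) such that the four fixed points of g₁ and g₂ on the projective line ℙ¹(ℝ) (i.e., their eigendirections) are pairwise distinct. Then for all sufficiently large p ∈ ℕ, the matrices g₁^p and g₂^p generate a free subgroup of SL(2,ℝ) of rank 2. -/
/-!
A hyperbolic `g ∈ SL(2, ℝ)` has eigenvectors `e`, `f` with eigenvalues `l`, `l⁻¹`, `|l| > 1`.
Acting on `ℙ¹(ℝ)`, a large power `g ^ p` maps everything outside a thin cone around the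
repelling direction `f` into a thin cone around the attracting direction `e`, and `g ^ (-p)` does
the same with the roles of `e` and `f` exchanged. When the four directions of `g₁` and `g₂` are
distinct, thin enough cones around them are pairwise disjoint, and the ping-pong lemma shows that
`g₁ ^ p` and `g₂ ^ p` generate a free group.
-/

open Matrix Filter Topology Pointwise Function Projectivization
open scoped MatrixGroups LinearAlgebra.Projectivization

namespace SL2PingPong

def wedge (u v : Fin 2 → ℝ) : ℝ := u 0 * v 1 - u 1 * v 0

@[simp] lemma wedge_self (v : Fin 2 → ℝ) : wedge v v = 0 := by
  rw [wedge]; ring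

lemma abs_wedge_comm (u v : Fin 2 → ℝ) : |wedge u v| = |wedge v u| := by
  rw [wedge, wedge, ← abs_neg]; ring_nf

@[simp] lemma wedge_smul_left (a : ℝ) (u v : Fin 2 → ℝ) :
    wedge (a • u) v = a * wedge u v := by
  simp only [wedge, Pi.smul_apply, smul_eq_mul]; ring

@[simp] lemma wedge_smul_right (a : ℝ) (u v : Fin 2 → ℝ) :
    wedge u (a • v) = a * wedge u v := by
  simp only [wedge, Pi.smul_apply, smul_eq_mul]; ring

lemma wedge_smul_add_wedge_smul (e f v : Fin 2 → ℝ) :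
    wedge v f • e + wedge e v • f = wedge e f • v := by
  ext i; fin_cases i <;>
    simp only [wedge, Fin.zero_eta, Fin.mk_one, Fin.isValue, Pi.add_apply, Pi.smul_apply,
      smul_eq_mul] <;> ring

lemma wedge_mulVec (A : Matrix (Fin 2) (Fin 2) ℝ) (u v : Fin 2 → ℝ) :
    wedge (A *ᵥ u) (A *ᵥ v) = A.det * wedge u v := by
  simp only [wedge, mulVec, dotProduct, Fin.isValue, Fin.sum_univ_two, det_fin_two]; ring

lemma smul_eq_coe_mulVec (g : SL(2, ℝ)) (v : Fin 2 → ℝ) :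
    g • v = (g : Matrix (Fin 2) (Fin 2) ℝ) *ᵥ v := rfl

@[simp] lemma wedge_smul_smul (g : SL(2, ℝ)) (u v : Fin 2 → ℝ) :
    wedge (g • u) (g • v) = wedge u v := by
  rw [smul_eq_coe_mulVec, smul_eq_coe_mulVec, wedge_mulVec, g.det_coe, one_mul]

lemma abs_wedge_le (u v : Fin 2 → ℝ) : |wedge u v| ≤ 2 * ‖u‖ * ‖v‖ := by
  have h := fun i j => mul_le_mul (norm_le_pi_norm u i) (norm_le_pi_norm v j)
    (norm_nonneg _) (norm_nonneg _)
  simp only [Real.norm_eq_abs] at h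
  calc |wedge u v| ≤ |u 0| * |v 1| + |u 1| * |v 0| := by
        rw [wedge, ← abs_mul, ← abs_mul]; exact abs_sub _ _
    _ ≤ 2 * ‖u‖ * ‖v‖ := by linarith [h 0 1, h 1 0]

lemma abs_wedge_mul_norm_le (e f v : Fin 2 → ℝ) :
    |wedge e f| * ‖v‖ ≤ |wedge v f| * ‖e‖ + |wedge e v| * ‖f‖ := by
  have := congrArg norm (wedge_smul_add_wedge_smul e f v)
  rw [norm_smul, Real.norm_eq_abs] at this
  rw [← this]
  refine (norm_add_le _ _).trans ?_
  rw [norm_smul, norm_smul, Real.norm_eq_abs, Real.norm_eq_abs]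

lemma exists_eq_smul_of_wedge_eq_zero {u w : Fin 2 → ℝ} (hu : u ≠ 0) (h : wedge u w = 0) :
    ∃ μ : ℝ, w = μ • u := by
  have hu' : wedge u ![-u 1, u 0] ≠ 0 := by
    have : wedge u ![-u 1, u 0] = u 0 ^ 2 + u 1 ^ 2 := by
      simp only [wedge, cons_val_one, cons_val_fin_one, cons_val_zero]; ring
    rw [this]
    contrapose! hu
    ext i; fin_cases i <;> simp only [Fin.zero_eta, Fin.mk_one, Fin.isValue, Pi.zero_apply] <;>
      nlinarith [sq_nonneg (u 0), sq_nonneg (u 1)]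
  refine ⟨(wedge u ![-u 1, u 0])⁻¹ * wedge w ![-u 1, u 0], ?_⟩
  have := wedge_smul_add_wedge_smul u ![-u 1, u 0] w
  rw [h, zero_smul, add_zero] at this
  rw [mul_smul, this, inv_smul_smul₀ hu']

lemma smul_eq_of_wedge_eq_zero {g : SL(2, ℝ)} {u w : Fin 2 → ℝ} {b : ℝ} (hu : u ≠ 0)
    (hw : w ≠ 0) (h : wedge u w = 0) (hb : g • w = b • w) : g • u = b • u := by
  obtain ⟨μ, rfl⟩ := exists_eq_smul_of_wedge_eq_zero hu h
  have hμ : μ ≠ 0 := by rintro rfl; simp at hw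
  rw [smul_comm, smul_comm b] at hb
  exact smul_right_injective _ hμ hb

lemma pow_smul_eq_of_smul_eq {g : SL(2, ℝ)} {v : Fin 2 → ℝ} {a : ℝ} (h : g • v = a • v)
    (p : ℕ) : g ^ p • v = a ^ p • v := by
  induction p with
  | zero => simp
  | succ p ih => rw [pow_succ, mul_smul, h, smul_comm, ih, smul_smul, pow_succ']

/-- By Cramer's rule `v = α • e + β • f` with `α = wedge v f / wedge e f` and
`β = wedge e v / wedge e f`, so this is the cone of directions with `|β| ≤ c * |α|`. -/
def cone (e f : Fin 2 → ℝ) (c : ℝ) : Set (ℙ ℝ (Fin 2 → ℝ)) :=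
  {x | |wedge e x.rep| ≤ c * |wedge x.rep f|}

lemma mk_mem_cone {e f v : Fin 2 → ℝ} {c : ℝ} (hv : v ≠ 0) :
    mk ℝ v hv ∈ cone e f c ↔ |wedge e v| ≤ c * |wedge v f| := by
  obtain ⟨a, ha⟩ := exists_smul_eq_mk_rep ℝ v hv
  have ha0 : 0 < |(a : ℝ)| := abs_pos.2 a.ne_zero
  rw [cone, Set.mem_ofPred_eq, ← ha, Units.smul_def, wedge_smul_left, wedge_smul_right,
    abs_mul, abs_mul, mul_left_comm, mul_le_mul_iff_right₀ ha0]

lemma mk_mem_cone_self {e : Fin 2 → ℝ} (f : Fin 2 → ℝ) {c : ℝ} (he : e ≠ 0) (hc : 0 ≤ c) :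
    mk ℝ e he ∈ cone e f c := by
  rw [mk_mem_cone he, wedge_self, abs_zero]; positivity

lemma abs_wedge_le_of_mk_mem_cone {e f v : Fin 2 → ℝ} {c : ℝ} (hv : v ≠ 0) (hc : 0 ≤ c)
    (h : mk ℝ v hv ∈ cone e f c) : |wedge e v| ≤ c * (2 * ‖f‖) * ‖v‖ := by
  rw [mk_mem_cone hv] at h
  exact h.trans ((mul_le_mul_of_nonneg_left (abs_wedge_le v f) hc).trans_eq (by ring))

lemma eventually_disjoint_cone {e e' : Fin 2 → ℝ} (f f' : Fin 2 → ℝ) (h : wedge e e' ≠ 0) :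
    ∀ᶠ c in 𝓝[>] 0, Disjoint (cone e f c) (cone e' f' c) := by
  set K := 2 * ‖f‖ * ‖e'‖ + 2 * ‖f'‖ * ‖e‖ with hK
  have hlim : Tendsto (fun c : ℝ => c * K) (𝓝[>] 0) (𝓝 0) := by
    simpa using (tendsto_id.mul_const K).mono_left (nhdsWithin_le_nhds (a := (0 : ℝ)))
  filter_upwards [hlim.eventually (gt_mem_nhds (abs_pos.2 h)), self_mem_nhdsWithin]
    with c hcK hc
  rw [Set.disjoint_left]
  intro x hmem hmem'
  induction x using Projectivization.ind with | h v hv => ?_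
  have h₁ := abs_wedge_le_of_mk_mem_cone hv hc.le hmem
  have h₂ := abs_wedge_le_of_mk_mem_cone hv hc.le hmem'
  have key : |wedge e e'| * ‖v‖ ≤ c * K * ‖v‖ :=
    calc |wedge e e'| * ‖v‖ ≤ |wedge e' v| * ‖e‖ + |wedge e v| * ‖e'‖ := by
          simpa only [abs_wedge_comm v e'] using abs_wedge_mul_norm_le e e' v
      _ ≤ c * (2 * ‖f'‖) * ‖v‖ * ‖e‖ + c * (2 * ‖f‖) * ‖v‖ * ‖e'‖ := by gcongr
      _ = c * K * ‖v‖ := by rw [hK]; ring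
  exact key.not_gt (mul_lt_mul_of_pos_right hcK (norm_pos_iff.2 hv))

structure IsHyperbolicFrame (g : SL(2, ℝ)) (l : ℝ) (e f : Fin 2 → ℝ) : Prop where
  one_lt_abs : 1 < |l|
  left_ne_zero : e ≠ 0
  right_ne_zero : f ≠ 0
  smul_left : g • e = l • e
  smul_right : g • f = l⁻¹ • f

lemma exists_one_lt_add_inv_eq {t : ℝ} (ht : 2 < t) : ∃ l : ℝ, 1 < l ∧ l + l⁻¹ = t := by
  set s := √(t ^ 2 - 4)
  have hs : s ^ 2 = t ^ 2 - 4 := Real.sq_sqrt (by nlinarith)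
  refine ⟨(t + s) / 2, by linarith [Real.sqrt_nonneg (t ^ 2 - 4)], ?_⟩
  rw [inv_eq_of_mul_eq_one_right (b := (t - s) / 2) (by linear_combination (-1 / 4 : ℝ) * hs)]
  ring

lemma exists_one_lt_abs_add_inv_eq {t : ℝ} (ht : 2 < |t|) :
    ∃ l : ℝ, 1 < |l| ∧ l + l⁻¹ = t := by
  rcases lt_abs.1 ht with ht | ht
  · obtain ⟨l, hl, hlt⟩ := exists_one_lt_add_inv_eq ht
    exact ⟨l, hl.trans_le (le_abs_self l), hlt⟩
  · obtain ⟨l, hl, hlt⟩ := exists_one_lt_add_inv_eq ht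
    refine ⟨-l, by rwa [abs_neg, abs_of_pos (one_pos.trans hl)], ?_⟩
    rw [inv_neg, ← neg_add, hlt, neg_neg]

lemma det_sub_smul_one (A : Matrix (Fin 2) (Fin 2) ℝ) (m : ℝ) :
    (A - m • 1).det = m ^ 2 - A.trace * m + A.det := by
  simp only [det_fin_two, trace_fin_two, Matrix.sub_apply, Matrix.smul_apply, smul_eq_mul,
    one_apply_eq, one_apply_ne zero_ne_one, one_apply_ne one_ne_zero]
  ring

lemma exists_smul_eq_of_det_sub_eq_zero (g : SL(2, ℝ)) {m : ℝ}
    (h : ((g : Matrix (Fin 2) (Fin 2) ℝ) - m • 1).det = 0) :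
    ∃ v : Fin 2 → ℝ, v ≠ 0 ∧ g • v = m • v := by
  obtain ⟨v, hv, hv0⟩ := exists_mulVec_eq_zero_iff.2 h
  rw [sub_mulVec, smul_mulVec, one_mulVec, sub_eq_zero] at hv0
  exact ⟨v, hv, hv0⟩

lemma exists_isHyperbolicFrame (g : SL(2, ℝ))
    (h : 2 < |trace (g : Matrix (Fin 2) (Fin 2) ℝ)|) : ∃ l e f, IsHyperbolicFrame g l e f := by
  obtain ⟨l, hl, hsum⟩ := exists_one_lt_abs_add_inv_eq h
  have hl0 : l ≠ 0 := by rintro rfl; exact absurd hl (by norm_num)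
  have hdet : ∀ m, m = l ∨ m = l⁻¹ → ((g : Matrix (Fin 2) (Fin 2) ℝ) - m • 1).det = 0 := by
    rintro m (rfl | rfl) <;> rw [det_sub_smul_one, ← hsum, g.det_coe] <;> field_simp <;> ring
  obtain ⟨e, he, hge⟩ := exists_smul_eq_of_det_sub_eq_zero g (hdet l (.inl rfl))
  obtain ⟨f, hf, hgf⟩ := exists_smul_eq_of_det_sub_eq_zero g (hdet l⁻¹ (.inr rfl))
  exact ⟨l, e, f, hl, he, hf, hge, hgf⟩

namespace IsHyperbolicFrame

variable {g : SL(2, ℝ)} {l : ℝ} {e f : Fin 2 → ℝ}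

lemma ne_zero (H : IsHyperbolicFrame g l e f) : l ≠ 0 := by
  rintro rfl; exact absurd H.one_lt_abs (by norm_num)

lemma inv (H : IsHyperbolicFrame g l e f) : IsHyperbolicFrame g⁻¹ l f e where
  one_lt_abs := H.one_lt_abs
  left_ne_zero := H.right_ne_zero
  right_ne_zero := H.left_ne_zero
  smul_left := by rw [inv_smul_eq_iff, smul_comm, H.smul_right, smul_inv_smul₀ H.ne_zero]
  smul_right := by rw [inv_smul_eq_iff, smul_comm, H.smul_left, inv_smul_smul₀ H.ne_zero]

lemma wedge_ne_zero (H : IsHyperbolicFrame g l e f) : wedge e f ≠ 0 := fun h => by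
  have hl : l = l⁻¹ := smul_left_injective ℝ H.left_ne_zero (show l • e = l⁻¹ • e by
    rw [← H.smul_left, smul_eq_of_wedge_eq_zero H.left_ne_zero H.right_ne_zero h H.smul_right])
  have : l * l = 1 := by nth_rewrite 2 [hl]; exact mul_inv_cancel₀ H.ne_zero
  nlinarith [abs_mul_abs_self l, H.one_lt_abs]

lemma wedge_left_pow_smul (H : IsHyperbolicFrame g l e f) (p : ℕ) (v : Fin 2 → ℝ) :
    wedge e (g ^ p • v) = (l ^ p)⁻¹ * wedge e v := by
  have := wedge_smul_smul (g ^ p) e v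
  rw [pow_smul_eq_of_smul_eq H.smul_left, wedge_smul_left] at this
  rw [← this, inv_mul_cancel_left₀ (pow_ne_zero p H.ne_zero)]

lemma wedge_pow_smul_right (H : IsHyperbolicFrame g l e f) (p : ℕ) (v : Fin 2 → ℝ) :
    wedge (g ^ p • v) f = l ^ p * wedge v f := by
  have := wedge_smul_smul (g ^ p) v f
  rw [pow_smul_eq_of_smul_eq H.smul_right, wedge_smul_right, inv_pow] at this
  rw [← this, mul_inv_cancel_left₀ (pow_ne_zero p H.ne_zero)]

lemma pow_smul_compl_cone_subset (H : IsHyperbolicFrame g l e f) {c : ℝ} (hc : 0 < c)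
    {p : ℕ} (hp : 1 ≤ c * |l| ^ p) : g ^ p • (cone f e c)ᶜ ⊆ cone e f c := by
  rintro _ ⟨x, hx, rfl⟩
  induction x using Projectivization.ind with | h v hv => ?_
  rw [Set.mem_compl_iff, mk_mem_cone hv, not_le, abs_wedge_comm v e, abs_wedge_comm f v] at hx
  dsimp only
  rw [smul_mk, mk_mem_cone, H.wedge_left_pow_smul, H.wedge_pow_smul_right, abs_mul, abs_mul,
    abs_inv, abs_pow]
  -- `g ^ p` scales `α` by `l ^ p` and `β` by `l⁻¹ ^ p`
  have hL : |l| ^ p ≠ 0 := pow_ne_zero p (abs_ne_zero.2 H.ne_zero)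
  calc (|l| ^ p)⁻¹ * |wedge e v|
      ≤ (|l| ^ p)⁻¹ * ((c * |l| ^ p) * (c * |l| ^ p) * |wedge e v|) := by
        gcongr
        exact le_mul_of_one_le_left (abs_nonneg _) (one_le_mul_of_one_le_of_one_le hp hp)
    _ = c * |l| ^ p * (c * |wedge e v|) := by field_simp
    _ ≤ c * |l| ^ p * |wedge v f| := by gcongr
    _ = c * (|l| ^ p * |wedge v f|) := by ring

lemma eventually_pow_smul_compl_cone_subset (H : IsHyperbolicFrame g l e f) {c : ℝ}
    (hc : 0 < c) : ∀ᶠ p in atTop, g ^ p • (cone f e c)ᶜ ⊆ cone e f c :=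
  (((tendsto_pow_atTop_atTop_of_one_lt H.one_lt_abs).const_mul_atTop hc).eventually_ge_atTop
    1).mono fun _ hp => H.pow_smul_compl_cone_subset hc hp

end IsHyperbolicFrame

lemma pairwise_disjoint_fin_two {α : Type*} {A B : Set α} (h : Disjoint A B) :
    Pairwise (Disjoint on ![A, B]) := by
  intro i j hij
  fin_cases i <;> fin_cases j <;> first | exact absurd rfl hij | exact h | exact h.symm

lemma eventually_injective_lift_pow {g₁ g₂ : SL(2, ℝ)} {l₁ l₂ : ℝ} {e₁ f₁ e₂ f₂ : Fin 2 → ℝ}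
    (H₁ : IsHyperbolicFrame g₁ l₁ e₁ f₁) (H₂ : IsHyperbolicFrame g₂ l₂ e₂ f₂)
    (hee : wedge e₁ e₂ ≠ 0) (hef : wedge e₁ f₂ ≠ 0) (hfe : wedge f₁ e₂ ≠ 0)
    (hff : wedge f₁ f₂ ≠ 0) :
    ∀ᶠ p in atTop,
      Injective (FreeGroup.lift fun i : Fin 2 => if i = 0 then g₁ ^ p else g₂ ^ p) := by
  obtain ⟨c, hXX, hYY, hXY₁, hXY₂, hXY₁₂, hYX₁₂, hc⟩ :=
    ((eventually_disjoint_cone f₁ f₂ hee).and <| (eventually_disjoint_cone e₁ e₂ hff).and <|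
      (eventually_disjoint_cone f₁ e₁ H₁.wedge_ne_zero).and <|
      (eventually_disjoint_cone f₂ e₂ H₂.wedge_ne_zero).and <|
      (eventually_disjoint_cone f₁ e₂ hef).and <|
      (eventually_disjoint_cone e₁ f₂ hfe).and eventually_mem_nhdsWithin).exists
  filter_upwards [H₁.eventually_pow_smul_compl_cone_subset hc,
    H₁.inv.eventually_pow_smul_compl_cone_subset hc, H₂.eventually_pow_smul_compl_cone_subset hc,
    H₂.inv.eventually_pow_smul_compl_cone_subset hc] with p h₁ h₁' h₂ h₂'
  rw [inv_pow] at h₁' h₂'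
  apply FreeGroup.injective_lift_of_ping_pong _
    ![cone e₁ f₁ c, cone e₂ f₂ c] ![cone f₁ e₁ c, cone f₂ e₂ c]
  · exact Fin.forall_fin_two.2 ⟨⟨_, mk_mem_cone_self f₁ H₁.left_ne_zero hc.le⟩,
      ⟨_, mk_mem_cone_self f₂ H₂.left_ne_zero hc.le⟩⟩
  · exact pairwise_disjoint_fin_two hXX
  · exact pairwise_disjoint_fin_two hYY
  · exact Fin.forall_fin_two.2 ⟨Fin.forall_fin_two.2 ⟨hXY₁, hXY₁₂⟩,
      Fin.forall_fin_two.2 ⟨hYX₁₂.symm, hXY₂⟩⟩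
  · exact Fin.forall_fin_two.2 ⟨h₁, h₂⟩
  · exact Fin.forall_fin_two.2 ⟨h₁', h₂'⟩

end SL2PingPong

open SL2PingPong

/-- If `g₁, g₂ ∈ SL(2,ℝ)` are hyperbolic (`|trace| > 2`) and their
eigendirections (fixed points on `ℙ¹(ℝ)`) are pairwise distinct — i.e. they have no
common eigendirection — then for all sufficiently large `p` the matrices `g₁^p` and
`g₂^p` generate a free group of rank 2. -/
theorem powers_generate_free_group
    (g₁ g₂ : Matrix.SpecialLinearGroup (Fin 2) ℝ)
    (h₁ : 2 < |Matrix.trace ((g₁ : Matrix (Fin 2) (Fin 2) ℝ))|)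
    (h₂ : 2 < |Matrix.trace ((g₂ : Matrix (Fin 2) (Fin 2) ℝ))|)
    (hdist : ∀ v : Fin 2 → ℝ, v ≠ 0 →
      (∃ c : ℝ, (g₁ : Matrix (Fin 2) (Fin 2) ℝ).mulVec v = c • v) →
      ¬ ∃ c : ℝ, (g₂ : Matrix (Fin 2) (Fin 2) ℝ).mulVec v = c • v) :
    ∃ P : ℕ, ∀ p : ℕ, P ≤ p →
      Function.Injective
        (FreeGroup.lift (fun i : Fin 2 => if i = 0 then g₁ ^ p else g₂ ^ p) :
          FreeGroup (Fin 2) →* Matrix.SpecialLinearGroup (Fin 2) ℝ) := by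
  obtain ⟨l₁, e₁, f₁, H₁⟩ := exists_isHyperbolicFrame g₁ h₁
  obtain ⟨l₂, e₂, f₂, H₂⟩ := exists_isHyperbolicFrame g₂ h₂
  have cross : ∀ {u w : Fin 2 → ℝ} {a b : ℝ}, u ≠ 0 → w ≠ 0 → g₁ • u = a • u →
      g₂ • w = b • w → wedge u w ≠ 0 := fun hu hw ha hb h =>
    hdist _ hu ⟨_, ha⟩ ⟨_, smul_eq_of_wedge_eq_zero hu hw h hb⟩
  exact eventually_atTop.1 <| eventually_injective_lift_pow H₁ H₂
    (cross H₁.left_ne_zero H₂.left_ne_zero H₁.smul_left H₂.smul_left)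
    (cross H₁.left_ne_zero H₂.right_ne_zero H₁.smul_left H₂.smul_right)
    (cross H₁.right_ne_zero H₂.left_ne_zero H₁.smul_right H₂.smul_left)
    (cross H₁.right_ne_zero H₂.right_ne_zero H₁.smul_right H₂.smul_right)
end

section
/- Let Δ be a measurable space with probability measure μ, partitioned mod 0 into sets Δ^(l) of positive measure (l ∈ ℤ), and let T : Δ → Δ restrict to bimeasurable bijections Δ^(l) → Δ. Suppose T has bounded distortion with constant C₀, meaning that for each finite word l̲ the set Δ^l̲ = {x : T^{j-1}(x) ∈ Δ^(l_j), 1 ≤ j ≤ |l̲|} has positive measure and the normalized pushforward μ^l̲ = T^{|l̲|}_*(μ|Δ^l̲)/μ(Δ^l̲) satisfies (1/C₀)μ ≤ μ^l̲ ≤ C₀μ. Then there exists a T-invariant measure ν on Δ with (1/C₀)μ ≤ ν ≤ C₀μ. -/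
open MeasureTheory

/-- The cylinder `Δ^l̲` associated to a finite word `w = (l₁, …, l_n)`:
the set of points `x` with `T^{j-1}(x) ∈ Δ^(l_j)` for `1 ≤ j ≤ n`. -/
def cylinder {X : Type*} (T : X → X) (D : ℤ → Set X) (n : ℕ) (w : Fin n → ℤ) : Set X :=
  {x | ∀ j : Fin n, T^[(j : ℕ)] x ∈ D (w j)}

/-!
Summing the distortion bound over the cylinders of length `n`, which partition `Δ` mod `0`, gives
`μ s / C₀ ≤ μ (T⁻ⁿ s) ≤ C₀ μ s` for every `n`; the cylinders do cover `Δ` mod `0` because, by the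
upper bound at earlier times, `T⁻ᵏ` of the exceptional null set is null. Hence every Cesàro average
of the push-forwards `Tᵏ_* μ` lies between `μ / C₀` and `C₀ μ`. Their limit along a free ultrafilter
is finitely additive and dominated by the finite measure `C₀ μ`, so it is a measure, and it is
`T`-invariant because the Cesàro averages of `μ (T⁻¹ s)` and of `μ s` differ by `O(1/n)`.
-/

open Filter Topology ENNReal NNReal

section Partition

variable {X ι : Type*} [MeasurableSpace X] {μ : Measure X} [Countable ι] {A : ι → Set X}

theorem tsum_measure_inter_of_ae_cover (hA : ∀ i, MeasurableSet (A i))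
    (hAd : Pairwise (Function.onFun Disjoint A)) (hcov : ∀ᵐ x ∂μ, ∃ i, x ∈ A i)
    {B : Set X} (hB : MeasurableSet B) : ∑' i, μ (A i ∩ B) = μ B := by
  have hconull : μ (⋃ i, A i)ᶜ = 0 := mem_ae_iff.mp <| by
    filter_upwards [hcov] with x hx using Set.mem_iUnion.mpr hx
  rw [← measure_iUnion (fun i j hij => (hAd hij).mono Set.inter_subset_left Set.inter_subset_left)
    fun i => (hA i).inter hB, ← Set.iUnion_inter, Set.inter_comm, measure_inter_conull hconull]

theorem measure_mem_Icc_of_ae_partition [IsProbabilityMeasure μ] (hA : ∀ i, MeasurableSet (A i))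
    (hAd : Pairwise (Function.onFun Disjoint A)) (hcov : ∀ᵐ x ∂μ, ∃ i, x ∈ A i)
    {B : Set X} (hB : MeasurableSet B) {a b : ℝ≥0∞}
    (ha : ∀ i, a * μ (A i) ≤ μ (A i ∩ B)) (hb : ∀ i, μ (A i ∩ B) ≤ b * μ (A i)) :
    μ B ∈ Set.Icc a b := by
  have htotal : ∑' i, μ (A i) = 1 := by
    simpa using tsum_measure_inter_of_ae_cover hA hAd hcov MeasurableSet.univ
  rw [← tsum_measure_inter_of_ae_cover hA hAd hcov hB]
  constructor
  · calc a = ∑' i, a * μ (A i) := by rw [ENNReal.tsum_mul_left, htotal, mul_one]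
      _ ≤ ∑' i, μ (A i ∩ B) := ENNReal.tsum_le_tsum ha
  · calc ∑' i, μ (A i ∩ B) ≤ ∑' i, b * μ (A i) := ENNReal.tsum_le_tsum hb
      _ = b := by rw [ENNReal.tsum_mul_left, htotal, mul_one]

end Partition

section LimitMeasure

variable {X ι : Type*} [MeasurableSpace X]

theorem isSetRing_measurableSet : IsSetRing {s : Set X | MeasurableSet s} :=
  ⟨.empty, fun _ _ hs ht => hs.union ht, fun _ _ hs ht => hs.diff ht⟩

theorem exists_measure_eq_of_additive_of_le {ρ : Measure X} [IsFiniteMeasure ρ]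
    (m : Set X → ℝ≥0∞) (hm_le : ∀ s, MeasurableSet s → m s ≤ ρ s)
    (hm_add : ∀ s t, MeasurableSet s → MeasurableSet t → Disjoint s t → m (s ∪ t) = m s + m t) :
    ∃ ν : Measure X, ∀ s, MeasurableSet s → ν s = m s := by
  have hm_empty : m ∅ = 0 := le_zero_iff.mp (by simpa using hm_le ∅ .empty)
  let m' := isSetRing_measurableSet.addContent_of_union m hm_empty
    fun hs ht hst => hm_add _ _ hs ht hst
  have hm_iUnion : ∀ f : ℕ → Set X, (∀ i, MeasurableSet (f i)) →
      Pairwise (Function.onFun Disjoint f) → m (⋃ i, f i) = ∑' i, m (f i) := by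
    intro f hf hfd
    refine addContent_iUnion_eq_sum_of_tendsto_zero isSetRing_measurableSet m'
      (fun s hs => ((hm_le s hs).trans_lt (measure_lt_top ρ s)).ne) ?_ hf
      (MeasurableSet.iUnion hf) hfd
    -- domination by the finite measure `ρ` gives continuity at `∅`, hence σ-additivity
    intro s hs hanti hempty
    have hρ : Tendsto (fun n => ρ (s n)) atTop (𝓝 0) := by
      simpa [hempty, Function.comp_def] using
        tendsto_measure_iInter_atTop (fun n => (hs n).nullMeasurableSet) hanti
          ⟨0, measure_ne_top ρ _⟩
    exact tendsto_of_tendsto_of_tendsto_of_le_of_le tendsto_const_nhds hρ (fun _ => zero_le)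
      fun n => hm_le _ (hs n)
  exact ⟨Measure.ofMeasurable (fun s _ => m s) hm_empty hm_iUnion,
    fun s hs => Measure.ofMeasurable_apply s hs⟩

theorem exists_measure_tendsto_of_le (U : Ultrafilter ι) {ν : ι → Measure X} {ρ : Measure X}
    [IsFiniteMeasure ρ] (hle : ∀ i, ν i ≤ ρ) :
    ∃ ν' : Measure X, ∀ s, MeasurableSet s → Tendsto (fun i => ν i s) U (𝓝 (ν' s)) := by
  let m : Set X → ℝ≥0∞ := fun s => (U.map fun i => ν i s).lim
  have hm : ∀ s, Tendsto (fun i => ν i s) U (𝓝 (m s)) := fun s =>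
    (U.map fun i => ν i s).le_nhds_lim
  obtain ⟨ν', hν'⟩ := exists_measure_eq_of_additive_of_le (ρ := ρ) m
    (fun s _ => le_of_tendsto' (hm s) fun i => hle i s)
    fun s t _ ht hst => tendsto_nhds_unique (hm _) <| by
      simpa only [measure_union hst ht] using (hm s).add (hm t)
  exact ⟨ν', fun s hs => hν' s hs ▸ hm s⟩

end LimitMeasure

section Cesaro

variable {X : Type*} [MeasurableSpace X] {μ ρ : Measure X} {T : X → X}

noncomputable def cesaroMeasure (μ : Measure X) (T : X → X) (n : ℕ) : Measure X :=
  (n : ℝ≥0∞)⁻¹ • ∑ k ∈ Finset.range n, μ.map T^[k]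

theorem cesaroMeasure_apply (n : ℕ) (s : Set X) :
    cesaroMeasure μ T n s = (n : ℝ≥0∞)⁻¹ * ∑ k ∈ Finset.range n, μ.map T^[k] s := by
  simp [cesaroMeasure, Measure.coe_finsetSum]

theorem cesaroMeasure_le (h : ∀ k, μ.map T^[k] ≤ ρ) (n : ℕ) : cesaroMeasure μ T n ≤ ρ := by
  refine Measure.le_iff'.mpr fun s => ?_
  rcases eq_or_ne n 0 with rfl | hn
  · simp [cesaroMeasure]
  calc cesaroMeasure μ T n s ≤ (n : ℝ≥0∞)⁻¹ * ∑ _k ∈ Finset.range n, ρ s := by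
        rw [cesaroMeasure_apply]
        exact mul_le_mul_right (Finset.sum_le_sum fun k _ => h k s) _
    _ = ρ s := by
        rw [Finset.sum_const, Finset.card_range, nsmul_eq_mul,
          ENNReal.inv_mul_cancel_left (by exact_mod_cast hn) (natCast_ne_top n)]

theorem le_cesaroMeasure (h : ∀ k, ρ ≤ μ.map T^[k]) {n : ℕ} (hn : n ≠ 0) :
    ρ ≤ cesaroMeasure μ T n := by
  refine Measure.le_iff'.mpr fun s => ?_
  calc ρ s = (n : ℝ≥0∞)⁻¹ * ∑ _k ∈ Finset.range n, ρ s := by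
        rw [Finset.sum_const, Finset.card_range, nsmul_eq_mul,
          ENNReal.inv_mul_cancel_left (by exact_mod_cast hn) (natCast_ne_top n)]
    _ ≤ cesaroMeasure μ T n s := by
        rw [cesaroMeasure_apply]
        exact mul_le_mul_right (Finset.sum_le_sum fun k _ => h k s) _

theorem cesaroMeasure_preimage_add (hT : Measurable T) (n : ℕ) {s : Set X} (hs : MeasurableSet s) :
    cesaroMeasure μ T n (T ⁻¹' s) + (n : ℝ≥0∞)⁻¹ * μ s =
      cesaroMeasure μ T n s + (n : ℝ≥0∞)⁻¹ * μ (T^[n] ⁻¹' s) := by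
  have hmap : ∀ k, μ.map T^[k] s = μ (T^[k] ⁻¹' s) := fun k =>
    Measure.map_apply (hT.iterate k) hs
  have hmap' : ∀ k, μ.map T^[k] (T ⁻¹' s) = μ (T^[k + 1] ⁻¹' s) := fun k => by
    rw [Measure.map_apply (hT.iterate k) (hT hs), Function.iterate_succ', Set.preimage_comp]
  simp only [cesaroMeasure_apply, hmap, hmap', ← mul_add]
  rw [show μ s = μ (T^[0] ⁻¹' s) from rfl,
    ← Finset.sum_range_succ' (fun k => μ (T^[k] ⁻¹' s)), Finset.sum_range_succ]

theorem tendsto_inv_nat_mul_of_le {u : ℕ → ℝ≥0∞} {C : ℝ≥0∞} (hC : C ≠ ∞) (hu : ∀ n, u n ≤ C) :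
    Tendsto (fun n : ℕ => (n : ℝ≥0∞)⁻¹ * u n) atTop (𝓝 0) := by
  have hlim : Tendsto (fun n : ℕ => (n : ℝ≥0∞)⁻¹ * C) atTop (𝓝 0) := by
    simpa using ENNReal.Tendsto.mul_const ENNReal.tendsto_inv_nat_nhds_zero (Or.inr hC)
  exact tendsto_of_tendsto_of_tendsto_of_le_of_le tendsto_const_nhds hlim (fun _ => zero_le)
    fun n => mul_le_mul_right (hu n) _

theorem map_eq_self_of_tendsto_cesaroMeasure [IsFiniteMeasure μ] (hT : Measurable T)
    {l : Filter ℕ} [l.NeBot] (hl : l ≤ atTop) {ν : Measure X}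
    (hν : ∀ s, MeasurableSet s → Tendsto (fun n => cesaroMeasure μ T n s) l (𝓝 (ν s))) :
    ν.map T = ν := by
  ext s hs
  have hvanish : ∀ t : ℕ → Set X, Tendsto (fun n : ℕ => (n : ℝ≥0∞)⁻¹ * μ (t n)) l (𝓝 0) :=
    fun t => (tendsto_inv_nat_mul_of_le (measure_ne_top μ Set.univ)
      fun n => measure_mono (Set.subset_univ (t n))).mono_left hl
  have hlhs := ((hν _ (hT hs)).add (hvanish fun _ => s)).congr
    fun n => cesaroMeasure_preimage_add hT n hs
  rw [Measure.map_apply hT hs]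
  simpa using tendsto_nhds_unique hlhs ((hν s hs).add (hvanish fun n => T^[n] ⁻¹' s))

theorem exists_map_eq_self_of_le_map_iterate_le (hT : Measurable T) {ρ₁ ρ₂ : Measure X}
    [IsFiniteMeasure ρ₂] (h₁ : ∀ n, ρ₁ ≤ μ.map T^[n]) (h₂ : ∀ n, μ.map T^[n] ≤ ρ₂) :
    ∃ ν : Measure X, ν.map T = ν ∧ ρ₁ ≤ ν ∧ ν ≤ ρ₂ := by
  have : IsFiniteMeasure μ := isFiniteMeasure_of_le ρ₂ (by simpa using h₂ 0)
  obtain ⟨ν, hν⟩ := exists_measure_tendsto_of_le (hyperfilter ℕ) (cesaroMeasure_le h₂)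
  have hpos : ∀ᶠ n in (hyperfilter ℕ : Filter ℕ), n ≠ 0 :=
    Nat.hyperfilter_le_atTop (eventually_ne_atTop 0)
  refine ⟨ν, map_eq_self_of_tendsto_cesaroMeasure hT Nat.hyperfilter_le_atTop hν,
    Measure.le_iff.mpr fun s hs => ?_, Measure.le_iff.mpr fun s hs => ?_⟩
  · exact ge_of_tendsto (hν s hs) (hpos.mono fun n hn => le_cesaroMeasure h₁ hn s)
  · exact le_of_tendsto' (hν s hs) fun n => cesaroMeasure_le h₂ n s

end Cesaro

section BoundedDistortion

variable {X : Type*} [MeasurableSpace X] {μ : Measure X} {D : ℤ → Set X} {T : X → X} {C₀ : ℝ≥0}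

def HasBoundedDistortion (μ : Measure X) (D : ℤ → Set X) (T : X → X) (C₀ : ℝ≥0) : Prop :=
  ∀ (n : ℕ) (w : Fin n → ℤ),
    0 < μ (cylinder T D n w) ∧
    ∀ s : Set X, MeasurableSet s →
      μ s / C₀ ≤ μ (cylinder T D n w ∩ T^[n] ⁻¹' s) / μ (cylinder T D n w) ∧
      μ (cylinder T D n w ∩ T^[n] ⁻¹' s) / μ (cylinder T D n w) ≤ C₀ * μ s

theorem measurableSet_cylinder (hT : Measurable T) (hD : ∀ l, MeasurableSet (D l)) (n : ℕ)
    (w : Fin n → ℤ) : MeasurableSet (cylinder T D n w) := by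
  simp only [_root_.cylinder, Set.ofPred_forall]
  exact MeasurableSet.iInter fun j => hT.iterate j (hD (w j))

omit [MeasurableSpace X] in
theorem pairwise_disjoint_cylinder (hDd : Pairwise (Function.onFun Disjoint D)) (n : ℕ) :
    Pairwise (Function.onFun Disjoint (cylinder T D n)) := by
  intro w w' hw
  obtain ⟨j, hj⟩ := Function.ne_iff.mp hw
  exact Set.disjoint_left.mpr fun x hx hx' => Set.disjoint_left.mp (hDd hj) (hx j) (hx' j)

theorem ae_exists_mem_cylinder {n : ℕ} (h : ∀ k < n, ∀ᵐ x ∂μ, T^[k] x ∈ ⋃ l, D l) :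
    ∀ᵐ x ∂μ, ∃ w, x ∈ cylinder T D n w := by
  have hall : ∀ᵐ x ∂μ, ∀ j : Fin n, T^[j] x ∈ ⋃ l, D l := ae_all_iff.mpr fun j => h j j.isLt
  filter_upwards [hall] with x hx
  choose w hw using fun j => Set.mem_iUnion.mp (hx j)
  exact ⟨w, hw⟩

namespace HasBoundedDistortion

variable [IsProbabilityMeasure μ] (hBD : HasBoundedDistortion μ D T C₀) (hT : Measurable T)
  (hD : ∀ l, MeasurableSet (D l)) (hDd : Pairwise (Function.onFun Disjoint D))
include hBD hT hD hDd

theorem measure_preimage_iterate_mem_Icc {n : ℕ} (hcov : ∀ k < n, ∀ᵐ x ∂μ, T^[k] x ∈ ⋃ l, D l)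
    {s : Set X} (hs : MeasurableSet s) :
    μ (T^[n] ⁻¹' s) ∈ Set.Icc (μ s / C₀) (C₀ * μ s) := by
  have hpos : ∀ w, μ (cylinder T D n w) ≠ 0 := fun w => (hBD n w).1.ne'
  have hfin : ∀ w, μ (cylinder T D n w) ≠ ∞ := fun w => measure_ne_top μ _
  exact measure_mem_Icc_of_ae_partition (measurableSet_cylinder hT hD n)
    (pairwise_disjoint_cylinder hDd n) (ae_exists_mem_cylinder hcov) (hT.iterate n hs)
    (fun w => (ENNReal.le_div_iff_mul_le (.inl (hpos w)) (.inl (hfin w))).mp ((hBD n w).2 s hs).1)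
    fun w => (ENNReal.div_le_iff_le_mul (.inl (hpos w)) (.inl (hfin w))).mp ((hBD n w).2 s hs).2

theorem ae_iterate_mem_iUnion (hcover : μ (Set.univ \ ⋃ l, D l) = 0) (n : ℕ) :
    ∀ᵐ x ∂μ, T^[n] x ∈ ⋃ l, D l := by
  induction n using Nat.strong_induction_on with
  | _ n ih =>
  rw [← Set.compl_eq_univ_sdiff] at hcover
  refine ae_iff.mpr (le_zero_iff.mp ?_)
  calc μ (T^[n] ⁻¹' (⋃ l, D l)ᶜ) ≤ C₀ * μ (⋃ l, D l)ᶜ :=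
        (hBD.measure_preimage_iterate_mem_Icc hT hD hDd ih (MeasurableSet.iUnion hD).compl).2
    _ = 0 := by rw [hcover, mul_zero]

theorem map_iterate_mem_Icc (hcover : μ (Set.univ \ ⋃ l, D l) = 0) (n : ℕ) :
    μ.map T^[n] ∈ Set.Icc ((C₀ : ℝ≥0∞)⁻¹ • μ) (C₀ • μ) := by
  have hbounds := fun s (hs : MeasurableSet s) => hBD.measure_preimage_iterate_mem_Icc (n := n)
    hT hD hDd (fun k _ => hBD.ae_iterate_mem_iUnion hT hD hDd hcover k) hs
  constructor <;> refine Measure.le_iff.mpr fun s hs => ?_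
  · simpa [Measure.map_apply (hT.iterate n) hs, ENNReal.div_eq_inv_mul] using (hbounds s hs).1
  · simpa [Measure.map_apply (hT.iterate n) hs] using (hbounds s hs).2

end HasBoundedDistortion

end BoundedDistortion

theorem bounded_distortion_invariant_measure_general
    {Δ : Type*} [MeasurableSpace Δ] (μ : Measure Δ) [IsProbabilityMeasure μ]
    (D : ℤ → Set Δ) (T : Δ → Δ) (C₀ : NNReal)
    (hTm : Measurable T)
    (hDm : ∀ l, MeasurableSet (D l))
    (hdisj : Pairwise (Function.onFun Disjoint D))
    (hcover : μ (Set.univ \ ⋃ l, D l) = 0)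
    (hBD : ∀ (n : ℕ) (w : Fin n → ℤ),
      0 < μ (cylinder T D n w) ∧
      ∀ s : Set Δ, MeasurableSet s →
        μ s / C₀ ≤ μ (cylinder T D n w ∩ T^[n] ⁻¹' s) / μ (cylinder T D n w) ∧
        μ (cylinder T D n w ∩ T^[n] ⁻¹' s) / μ (cylinder T D n w) ≤ C₀ * μ s) :
    ∃ ν : Measure Δ,
      (∀ s : Set Δ, MeasurableSet s → ν (T ⁻¹' s) = ν s) ∧
      ∀ s : Set Δ, μ s / C₀ ≤ ν s ∧ ν s ≤ C₀ * μ s := by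
  have hbounds := HasBoundedDistortion.map_iterate_mem_Icc hBD hTm hDm hdisj hcover
  obtain ⟨ν, hνT, hν₁, hν₂⟩ := exists_map_eq_self_of_le_map_iterate_le hTm
    (fun n => (hbounds n).1) fun n => (hbounds n).2
  refine ⟨ν, fun s hs => by rw [← Measure.map_apply hTm hs, hνT], fun s => ⟨?_, ?_⟩⟩
  · rw [ENNReal.div_eq_inv_mul]
    simpa using Measure.le_iff'.mp hν₁ s
  · simpa using Measure.le_iff'.mp hν₂ s

/-- A Markov map with bounded distortion constant `C₀` admits an
invariant measure `ν` with `(1/C₀)·μ ≤ ν ≤ C₀·μ`. -/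
theorem bounded_distortion_invariant_measure
    {Δ : Type*} [MeasurableSpace Δ] (μ : Measure Δ) [IsProbabilityMeasure μ]
    (D : ℤ → Set Δ) (T : Δ → Δ) (C₀ : NNReal) (hC₀ : 0 < C₀)
    (hTm : Measurable T)
    (hDm : ∀ l, MeasurableSet (D l))
    (hDpos : ∀ l, 0 < μ (D l))
    (hdisj : Pairwise (Function.onFun Disjoint D))
    (hcover : μ (Set.univ \ ⋃ l, D l) = 0)
    (hbij : ∀ l, Set.BijOn T (D l) Set.univ)
    (hBD : ∀ (n : ℕ) (w : Fin n → ℤ),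
      0 < μ (cylinder T D n w) ∧
      ∀ s : Set Δ, MeasurableSet s →
        μ s / C₀ ≤ μ (cylinder T D n w ∩ T^[n] ⁻¹' s) / μ (cylinder T D n w) ∧
        μ (cylinder T D n w ∩ T^[n] ⁻¹' s) / μ (cylinder T D n w) ≤ C₀ * μ s) :
    ∃ ν : Measure Δ,
      (∀ s : Set Δ, MeasurableSet s → ν (T ⁻¹' s) = ν s) ∧
      ∀ s : Set Δ, μ s / C₀ ≤ ν s ∧ ν s ≤ C₀ * μ s :=
  bounded_distortion_invariant_measure_general μ D T C₀ hTm hDm hdisj hcover hBD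
end
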